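/- For every real κ with 1 < κ ≤ 2 and every vector w ∈ ℝ⁵ satisfying ⟨w, w⟩ = 1, ⟨w_x, w⟩ = −1, ⟨w_c, w⟩ = −1, ⟨w_f, w⟩ = −1, ⟨w_c*, w⟩ = 1 and ⟨w_z, w⟩ = √(3 + 2√κ − κ), one has ⟨w_{-c}, w⟩ = −1 − 2√κ and ⟨w_{-f}, w⟩ = 3 − 4/√κ − 8/κ, and both of these values are strictly less than −1; that is, the bridge ball is disjoint from the balls b_{-c} and b_{-f} of the pyramidal ball packing. -/

import Mathlib

noncomputable section

/-- The Lorentzian product on ℝ⁵: ⟨u,v⟩ = u₁v₁ + u₂v₂ + u₃v₃ + u₄v₄ − u₅v₅. -/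
def lprod5 (u v : Fin 5 → ℝ) : ℝ :=
  u 0 * v 0 + u 1 * v 1 + u 2 * v 2 + u 3 * v 3 - u 4 * v 4

/-- Inversive coordinates of the blow-ups to ℝ³ of the standard pyramidal disk
packing, its mirror and tangency disks, and the half-space `{z ≥ 0}`. -/
def wx : Fin 5 → ℝ := ![0, -1, 0, 1, 1]
def wc (κ : ℝ) : Fin 5 → ℝ := ![0, 1 - κ, 0, -1, κ - 1]
def wf (κ : ℝ) : Fin 5 → ℝ := ![2 / Real.sqrt κ, 0, 0, 2 / κ - 1, 2 / κ]
def wmc : Fin 5 → ℝ := ![0, 1, 0, 1, 1]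
def wmf (κ : ℝ) : Fin 5 → ℝ := ![-(2 / Real.sqrt κ), 0, 0, 2 / κ - 1, 2 / κ]
def wcs (κ : ℝ) : Fin 5 → ℝ :=
  ![0, -(Real.sqrt κ / 2), 0, -(1 / Real.sqrt κ), (κ - 2) / (2 * Real.sqrt κ)]
def wt (κ : ℝ) : Fin 5 → ℝ :=
  ![0, -(2 / Real.sqrt (κ ^ 2 + 4)), 0, κ / Real.sqrt (κ ^ 2 + 4), 0]
def wz : Fin 5 → ℝ := ![0, 0, 1, 0, 0]

/-! Write `κ = s²`, so that `√κ = s` and every coordinate is a rational function of `s`.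
The tangency conditions with `w_x`, `w_c` and `w_c*` are linear in `w` and determine its
coordinates `w 3 = 2/κ - 1` and `w 4 = √κ + 2/κ`. The vector `w₋c` is the reflection
`w_c - 2√κ w_c*` of `w_c` in the mirror `w_c*`, so `⟨w₋c, w⟩ = ⟨w_c, w⟩ - 2√κ ⟨w_c*, w⟩`;
and `w₋f` is the reflection of `w_f` in the plane `{x = 0}`, so `⟨w₋f, w⟩ + ⟨w_f, w⟩`
involves only `w 3` and `w 4`. -/

lemma lprod5_cons (a b c d e : ℝ) (w : Fin 5 → ℝ) :
    lprod5 ![a, b, c, d, e] w = a * w 0 + b * w 1 + c * w 2 + d * w 3 - e * w 4 :=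
  rfl

lemma lprod5_sub_left (u v w : Fin 5 → ℝ) : lprod5 (u - v) w = lprod5 u w - lprod5 v w := by
  simp only [lprod5, Pi.sub_apply]; ring

lemma lprod5_smul_left (a : ℝ) (u w : Fin 5 → ℝ) : lprod5 (a • u) w = a * lprod5 u w := by
  simp only [lprod5, Pi.smul_apply, smul_eq_mul]; ring

lemma wmc_eq_wc_sub_smul_wcs {s : ℝ} (hs : 0 < s) : wmc = wc (s ^ 2) - (2 * s) • wcs (s ^ 2) := by
  rw [wmc, wc, wcs, Real.sqrt_sq hs.le]
  ext i
  fin_cases i <;>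
    simp only [Matrix.smul_cons, Matrix.smul_empty, smul_eq_mul, Pi.sub_apply, Fin.isValue,
      Fin.zero_eta, Fin.mk_one, Fin.reduceFinMk, Matrix.cons_val_zero, Matrix.cons_val_one,
      Matrix.cons_val] <;>
    field_simp <;> ring

lemma lprod5_wmf_add_lprod5_wf (κ : ℝ) (w : Fin 5 → ℝ) :
    lprod5 (wmf κ) w + lprod5 (wf κ) w = 2 * ((2 / κ - 1) * w 3 - 2 / κ * w 4) := by
  simp only [wmf, wf, lprod5_cons]; ring

lemma coords_of_tangent_wx_wc_wcs {s : ℝ} (hs : 0 < s) {w : Fin 5 → ℝ} (hx : lprod5 wx w = -1)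
    (hc : lprod5 (wc (s ^ 2)) w = -1) (hcs : lprod5 (wcs (s ^ 2)) w = 1) :
    w 3 = 2 / s ^ 2 - 1 ∧ w 4 = s + 2 / s ^ 2 := by
  rw [wx, lprod5_cons] at hx
  rw [wc, lprod5_cons] at hc
  rw [wcs, lprod5_cons, Real.sqrt_sq hs.le] at hcs
  field_simp at hcs
  constructor <;> field_simp
  · linear_combination (s ^ 2 - 1) * hx - hc
  · linear_combination (s ^ 2 / 2 - 1) * hx - (1 + s ^ 2 / 2) * hc + s ^ 2 / 2 * hcs

lemma lprod5_wmc_of_tangent {s : ℝ} (hs : 0 < s) {w : Fin 5 → ℝ}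
    (hc : lprod5 (wc (s ^ 2)) w = -1) (hcs : lprod5 (wcs (s ^ 2)) w = 1) :
    lprod5 wmc w = -1 - 2 * s := by
  rw [wmc_eq_wc_sub_smul_wcs hs, lprod5_sub_left, lprod5_smul_left, hc, hcs]; ring

lemma lprod5_wmf_of_tangent {s : ℝ} (hs : 0 < s) {w : Fin 5 → ℝ} (hx : lprod5 wx w = -1)
    (hc : lprod5 (wc (s ^ 2)) w = -1) (hf : lprod5 (wf (s ^ 2)) w = -1)
    (hcs : lprod5 (wcs (s ^ 2)) w = 1) :
    lprod5 (wmf (s ^ 2)) w = 3 - 4 / s - 8 / s ^ 2 := by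
  obtain ⟨hw3, hw4⟩ := coords_of_tangent_wx_wc_wcs hs hx hc hcs
  have hsum := lprod5_wmf_add_lprod5_wf (s ^ 2) w
  rw [hf, hw3, hw4] at hsum
  rw [eq_sub_of_add_eq hsum]
  field_simp
  ring

lemma three_sub_four_div_sub_eight_div_sq_lt_neg_one {s : ℝ} (hs : 0 < s) (hs2 : s ^ 2 ≤ 2) :
    3 - 4 / s - 8 / s ^ 2 < -1 := by
  have h8 : 4 ≤ 8 / s ^ 2 := by rw [le_div_iff₀ (by positivity)]; linarith
  have h4 : 0 < 4 / s := by positivity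
  linarith

theorem bridge_ball_disjoint_general (κ : ℝ) (hκ1 : 1 < κ) (hκ2 : κ ≤ 2)
    (w : Fin 5 → ℝ)
    (hx : lprod5 wx w = -1) (hc : lprod5 (wc κ) w = -1)
    (hf : lprod5 (wf κ) w = -1) (hcs : lprod5 (wcs κ) w = 1) :
    lprod5 wmc w = -1 - 2 * Real.sqrt κ ∧
    lprod5 (wmf κ) w = 3 - 4 / Real.sqrt κ - 8 / κ ∧
    -1 - 2 * Real.sqrt κ < -1 ∧
    3 - 4 / Real.sqrt κ - 8 / κ < -1 := by
  have hκ : 0 < κ := zero_lt_one.trans hκ1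
  obtain ⟨s, hs, rfl⟩ : ∃ s : ℝ, 0 < s ∧ s ^ 2 = κ :=
    ⟨Real.sqrt κ, Real.sqrt_pos.2 hκ, Real.sq_sqrt hκ.le⟩
  rw [Real.sqrt_sq hs.le]
  exact ⟨lprod5_wmc_of_tangent hs hc hcs, lprod5_wmf_of_tangent hs hx hc hf hcs,
    by linarith, three_sub_four_div_sub_eight_div_sq_lt_neg_one hs hκ2⟩

/-- For `1 < κ ≤ 2`, the bridge ball is disjoint from the balls `b₋c` and `b₋f`:
`⟨w₋c, w⟩ = −1 − 2√κ < −1` and `⟨w₋f, w⟩ = 3 − 4/√κ − 8/κ < −1`. -/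
theorem bridge_ball_disjoint (κ : ℝ) (hκ1 : 1 < κ) (hκ2 : κ ≤ 2)
    (w : Fin 5 → ℝ)
    (hww : lprod5 w w = 1) (hx : lprod5 wx w = -1) (hc : lprod5 (wc κ) w = -1)
    (hf : lprod5 (wf κ) w = -1) (hcs : lprod5 (wcs κ) w = 1)
    (hz : lprod5 wz w = Real.sqrt (3 + 2 * Real.sqrt κ - κ)) :
    lprod5 wmc w = -1 - 2 * Real.sqrt κ ∧
    lprod5 (wmf κ) w = 3 - 4 / Real.sqrt κ - 8 / κ ∧
    -1 - 2 * Real.sqrt κ < -1 ∧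
    3 - 4 / Real.sqrt κ - 8 / κ < -1 :=
  bridge_ball_disjoint_general κ hκ1 hκ2 w hx hc hf hcs
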